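/- arXiv:2504.06941 — 2 statements merged into one kernel-verified Lean document; each statement's English description precedes it below -/
import Mathlib

section
/- In ℤ[[q]], the identity ψ(q)^2 = φ(q)·ψ(q^2) holds, where φ(q) = ∑_{n∈ℤ} q^{n^2} and ψ(q) = ∑_{n≥0} q^{n(n+1)/2}. -/
open PowerSeries
open scoped Classical

/-- `f m = ∏_{n ≥ 1} (1 - q^{m n})` in `ℤ[[q]]`, defined coefficientwise via the
stabilizing partial products (factors with `k > n` do not affect the coefficient of `q^n`). -/
noncomputable def f (m : ℕ) : PowerSeries ℤ :=
  PowerSeries.mk fun n =>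
    PowerSeries.coeff n (∏ k ∈ Finset.Icc 1 n, (1 - (PowerSeries.X : PowerSeries ℤ) ^ (m * k)))

/-- Ramanujan's theta function `φ(q) = ∑_{n ∈ ℤ} q^{n^2} = 1 + 2 ∑_{n ≥ 1} q^{n^2}`. -/
noncomputable def phi : PowerSeries ℤ :=
  PowerSeries.mk fun n => if n = 0 then 1 else if IsSquare n then 2 else 0

/-- Ramanujan's theta function `ψ(q) = ∑_{n ≥ 0} q^{n(n+1)/2}`. -/
noncomputable def psi : PowerSeries ℤ :=
  PowerSeries.mk fun n => if ∃ k, k * (k + 1) = 2 * n then 1 else 0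

/-- Substitution `q ↦ q^j` on formal power series. -/
noncomputable def substPow (j : ℕ) (F : PowerSeries ℤ) : PowerSeries ℤ :=
  PowerSeries.mk fun n => if j ∣ n then PowerSeries.coeff (n / j) F else 0

/-- `F(-q)`. -/
noncomputable def neg_q (F : PowerSeries ℤ) : PowerSeries ℤ :=
  PowerSeries.rescale (-1 : ℤ) F

/-- `bt n` : the number of overcubic partition triples of `n`, via the generating
function `∑ bt(n) q^n = f_4^3 / (f_1^6 f_2^3)`. -/
noncomputable def bt (n : ℕ) : ℤ :=
  PowerSeries.coeff n (f 4 ^ 3 * Ring.inverse (f 1) ^ 6 * Ring.inverse (f 2) ^ 3)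

/-!
`ψ(q)²` counts the pairs `(a, b) ∈ ℕ²` with `T a + T b = n`, where `T k = k(k+1)/2`, and
`φ(q) ψ(q²)` counts the pairs `(σ, k) ∈ ℤ × ℕ` with `σ² + k(k+1) = n`. The two sets are in
weight-preserving bijection because of the identities
`T (k + σ) + T (k - σ) = σ² + k(k+1) = T (σ + k) + T (σ - k - 1)`:
a pair `(a, b)` with `a + b` even comes from the first one, a pair with `a + b` odd from the second.
-/

open Finset Function

/-- `∑_{i : ι} q^{w i}`; an infinite fibre of `w` contributes the junk coefficient `0`. -/
noncomputable def weightSeries {ι : Type*} (w : ι → ℕ) : PowerSeries ℤ :=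
  PowerSeries.mk fun n => Nat.card {i // w i = n}

section WeightSeries

variable {ι κ : Type*}

theorem coeff_weightSeries (w : ι → ℕ) (n : ℕ) :
    coeff n (weightSeries w) = Nat.card {i // w i = n} :=
  coeff_mk _ _

theorem weightSeries_congr {v : ι → ℕ} {w : κ → ℕ} (e : ι ≃ κ) (h : ∀ i, w (e i) = v i) :
    weightSeries v = weightSeries w := by
  ext n
  simp only [coeff_weightSeries]
  exact congrArg _ (Nat.card_congr (e.subtypeEquiv fun i => by rw [h]))

def fiberAddEquiv (v : ι → ℕ) (w : κ → ℕ) (n : ℕ) :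
    {p : ι × κ // v p.1 + w p.2 = n} ≃
      Σ x : antidiagonal n, {i // v i = x.1.1} × {j // w j = x.1.2} where
  toFun p := ⟨⟨(v p.1.1, w p.1.2), mem_antidiagonal.2 p.2⟩, ⟨p.1.1, rfl⟩, ⟨p.1.2, rfl⟩⟩
  invFun x := ⟨(x.2.1.1, x.2.2.1), by rw [x.2.1.2, x.2.2.2]; exact mem_antidiagonal.1 x.1.2⟩
  left_inv _ := rfl
  right_inv := by
    rintro ⟨⟨⟨a, b⟩, h⟩, ⟨i, hi : v i = a⟩, ⟨j, hj : w j = b⟩⟩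
    subst hi hj
    rfl

theorem weightSeries_mul {v : ι → ℕ} {w : κ → ℕ} (hv : ∀ n, Finite {i // v i = n})
    (hw : ∀ n, Finite {j // w j = n}) :
    weightSeries v * weightSeries w = weightSeries fun p : ι × κ => v p.1 + w p.2 := by
  ext n
  rw [coeff_mul, coeff_weightSeries, Nat.card_congr (fiberAddEquiv v w n), Nat.card_sigma,
    ← Finset.sum_coe_sort]
  push_cast
  simp only [coeff_weightSeries, Nat.card_prod, Nat.cast_mul]

theorem finite_fiber_of_injective {w : ι → ℕ} (hw : Injective w) (n : ℕ) :
    Finite {i // w i = n} :=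
  have : Subsingleton {i // w i = n} := ⟨fun a b => Subtype.ext (hw (a.2.trans b.2.symm))⟩
  inferInstance

theorem coeff_weightSeries_of_injective {w : ι → ℕ} (hw : Injective w) (n : ℕ) :
    coeff n (weightSeries w) = if ∃ i, w i = n then 1 else 0 := by
  rw [coeff_weightSeries]
  split_ifs with h
  · obtain ⟨i, rfl⟩ := h
    have : Unique {j // w j = w i} := ⟨⟨⟨i, rfl⟩⟩, fun j => Subtype.ext (hw j.2)⟩
    simp
  · have : IsEmpty {j // w j = n} := ⟨fun j => h ⟨j.1, j.2⟩⟩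
    simp [Nat.card_of_isEmpty]

theorem substPow_weightSeries {j : ℕ} (hj : 0 < j) (w : ι → ℕ) :
    substPow j (weightSeries w) = weightSeries fun i => j * w i := by
  ext n
  simp only [substPow, coeff_mk, coeff_weightSeries]
  split_ifs with h
  · obtain ⟨m, rfl⟩ := h
    simp [Nat.mul_div_cancel_left m hj, Nat.mul_left_cancel_iff hj]
  · have : IsEmpty {i // j * w i = n} := ⟨fun i => h ⟨w i.1, i.2.symm⟩⟩
    simp [Nat.card_of_isEmpty]

end WeightSeries

def triangular (k : ℕ) : ℕ := k * (k + 1) / 2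

theorem two_mul_triangular (k : ℕ) : 2 * triangular k = k * (k + 1) := by
  obtain ⟨m, hm⟩ := Nat.even_mul_succ_self k
  rw [triangular, hm]
  omega

theorem triangular_strictMono : StrictMono triangular :=
  strictMono_nat_of_lt_succ fun k => by
    have := two_mul_triangular k
    have := two_mul_triangular (k + 1)
    nlinarith

theorem triangular_add_triangular_of_int {a b k : ℕ} {σ : ℤ}
    (h : (a : ℤ) * (a + 1) + b * (b + 1) = 2 * (σ ^ 2 + k * (k + 1))) :
    triangular a + triangular b = σ.natAbs ^ 2 + 2 * triangular k := by
  have ha := two_mul_triangular a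
  have hb := two_mul_triangular b
  have hk := two_mul_triangular k
  zify at ha hb hk ⊢
  rw [sq_abs]
  linarith

theorem psi_eq_weightSeries : psi = weightSeries triangular := by
  ext n
  rw [coeff_weightSeries_of_injective triangular_strictMono.injective]
  simp only [psi, coeff_mk, ← two_mul_triangular, Nat.mul_left_cancel_iff two_pos]

theorem card_natAbs_sq_eq (n : ℕ) :
    Nat.card {σ : ℤ // σ.natAbs ^ 2 = n} = if n = 0 then 1 else if IsSquare n then 2 else 0 := by
  split_ifs with h₀ hsq
  · subst h₀
    simp
  · obtain ⟨s, rfl⟩ := hsq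
    have hs : (s : ℤ) ≠ -s := by
      have : s ≠ 0 := fun h => h₀ (by simp [h])
      omega
    have : {σ : ℤ | σ.natAbs ^ 2 = s * s} = {(s : ℤ), -(s : ℤ)} := by
      ext σ
      simp [sq, Nat.mul_self_inj, Int.natAbs_eq_iff]
    rw [← Set.coe_ofPred, Nat.card_coe_set_eq, this, Set.ncard_pair hs]
  · have : IsEmpty {σ : ℤ // σ.natAbs ^ 2 = n} :=
      ⟨fun σ => hsq ⟨σ.1.natAbs, by rw [← sq]; exact σ.2.symm⟩⟩
    simp

theorem finite_natAbs_sq_fiber (n : ℕ) : Finite {σ : ℤ // σ.natAbs ^ 2 = n} :=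
  Set.Finite.to_subtype <|
    (Set.finite_Icc (-(n : ℤ)) n).subset fun σ (hσ : σ.natAbs ^ 2 = n) => by
      have : σ.natAbs ≤ n := hσ ▸ Nat.le_self_pow two_ne_zero _
      simp only [Set.mem_Icc]
      omega

theorem phi_eq_weightSeries : phi = weightSeries fun σ : ℤ => σ.natAbs ^ 2 := by
  ext n
  rw [coeff_weightSeries, card_natAbs_sq_eq]
  simp only [phi, coeff_mk]
  split_ifs <;> rfl

def triangularPairEquiv : ℕ × ℕ ≃ ℤ × ℕ where
  toFun p :=
    if (p.1 + p.2) % 2 = 0 then (((p.1 : ℤ) - p.2) / 2, (p.1 + p.2) / 2)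
    else if p.2 < p.1 then (((p.1 + p.2 + 1) / 2 : ℕ), (p.1 - p.2 - 1) / 2)
    else (-((p.1 + p.2 + 1) / 2 : ℕ), (p.2 - p.1 - 1) / 2)
  invFun q :=
    if q.1.natAbs ≤ q.2 then ((q.2 + q.1).toNat, (q.2 - q.1).toNat)
    else if 0 ≤ q.1 then ((q.1 + q.2).toNat, (q.1 - q.2 - 1).toNat)
    else ((-q.1 - q.2 - 1).toNat, (q.2 - q.1).toNat)
  left_inv p := by
    dsimp only
    split_ifs <;> ext <;> omega
  right_inv q := by
    dsimp only
    split_ifs <;> ext <;> omega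

theorem triangular_add_triangular_symm_apply (q : ℤ × ℕ) :
    triangular (triangularPairEquiv.symm q).1 + triangular (triangularPairEquiv.symm q).2 =
      q.1.natAbs ^ 2 + 2 * triangular q.2 := by
  obtain ⟨σ, k⟩ := q
  apply triangular_add_triangular_of_int
  simp only [triangularPairEquiv, Equiv.coe_fn_symm_mk]
  split_ifs <;> rw [Int.toNat_of_nonneg (by omega), Int.toNat_of_nonneg (by omega)] <;> ring

theorem stmt5 : psi ^ 2 = phi * substPow 2 psi := by
  have hψ := finite_fiber_of_injective triangular_strictMono.injective
  have h2ψ : ∀ n, Finite {k // 2 * triangular k = n} := finite_fiber_of_injective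
    ((mul_right_injective₀ two_ne_zero).comp triangular_strictMono.injective)
  rw [sq, psi_eq_weightSeries, phi_eq_weightSeries, substPow_weightSeries two_pos,
    weightSeries_mul hψ hψ, weightSeries_mul finite_natAbs_sq_fiber h2ψ]
  exact (weightSeries_congr triangularPairEquiv.symm triangular_add_triangular_symm_apply).symm
end

section
/- Modulo 8, the reciprocal of f_1^2/f_2 satisfies f_2/f_1^2 ≡ 1 - 2∑_{n≥1}(-1)^n q^{n^2} + 4∑_{n≥1} q^{2n^2} (mod 8), i.e., all coefficients of the difference are divisible by 8. -/
/-!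
Gauss's identity `f₁² = f₂ · φ(-q)` with `φ(-q) = 1 + 2 S1` comes from a finite form of
Jacobi's triple product. Cauchy's `q`-binomial theorem gives
`∏_{j<N} (1 - q^{2j+1})² = ∑_{k ≤ 2N} (-1)^{N+k} q^{(N-k)²} [2N choose k]_{q²}`,
and multiplying by `(q²; q²)_N` turns each Gaussian binomial into `1` modulo a power of `q` that
grows with `N`, while the partial products of `f₁` and `f₂` stabilise coefficientwise.
Hence `f₂ / f₁² = 1 / (1 + 2 S1) ≡ 1 - 2 S1 + 4 S1² (mod 8)`, and
`S1² ≡ S1(q²) ≡ S2 (mod 2)` because squaring is the Frobenius on `𝔽₂⟦q⟧`.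
-/

open PowerSeries
open scoped Classical

/-- `∑_{n ≥ 1} (-1)^n q^{n^2}`. -/
noncomputable def S1 : PowerSeries ℤ :=
  PowerSeries.mk fun m =>
    if m ≠ 0 ∧ Nat.sqrt m * Nat.sqrt m = m then (-1 : ℤ) ^ Nat.sqrt m else 0

/-- `∑_{n ≥ 1} q^{2 n^2}`. -/
noncomputable def S2 : PowerSeries ℤ :=
  PowerSeries.mk fun m => if ∃ k, 1 ≤ k ∧ 2 * (k * k) = m then (1 : ℤ) else 0

open Finset

lemma Nat.choose_two_succ (k : ℕ) : (k + 1).choose 2 = k.choose 2 + k := by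
  rw [Nat.choose_succ_succ', Nat.choose_one_right, add_comm]

lemma Nat.two_mul_choose_two_add_self (k : ℕ) : 2 * k.choose 2 + k = k ^ 2 := by
  induction k with
  | zero => rfl
  | succ k ih => rw [Nat.choose_two_succ]; linear_combination ih

lemma prod_range_pow_two_mul_add_one {M : Type*} [CommMonoid M] (x : M) (N : ℕ) :
    ∏ i ∈ range N, x ^ (2 * i + 1) = x ^ (N ^ 2) := by
  induction N with
  | zero => simp
  | succ N ih => rw [prod_range_succ, ih, ← pow_add]; ring_nf

section GaussBinom

variable {A : Type*} [CommRing A] (t : A)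

noncomputable def gaussBinom : ℕ → ℕ → A
  | _, 0 => 1
  | 0, _ + 1 => 0
  | n + 1, k + 1 => gaussBinom n (k + 1) + t ^ (n - k) * gaussBinom n k

/-- The `q`-Pochhammer symbol `(t; t)_n`. -/
noncomputable def qPochhammer (n : ℕ) : A := ∏ i ∈ range n, (1 - t ^ (i + 1))

@[simp] lemma gaussBinom_zero_right (n : ℕ) : gaussBinom t n 0 = 1 := by cases n <;> rfl

lemma gaussBinom_succ_succ (n k : ℕ) :
    gaussBinom t (n + 1) (k + 1) = gaussBinom t n (k + 1) + t ^ (n - k) * gaussBinom t n k :=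
  rfl

lemma gaussBinom_eq_zero_of_lt {n k : ℕ} (h : n < k) : gaussBinom t n k = 0 := by
  induction n generalizing k with
  | zero => obtain ⟨k, rfl⟩ := Nat.exists_eq_add_of_lt h; rfl
  | succ n ih =>
    obtain ⟨k, rfl⟩ := Nat.exists_eq_add_of_lt h
    rw [show n + 1 + k + 1 = (n + k + 1) + 1 by ring, gaussBinom_succ_succ,
      ih (by omega), ih (by omega), mul_zero, add_zero]

@[simp] lemma gaussBinom_self (n : ℕ) : gaussBinom t n n = 1 := by
  induction n with
  | zero => rfl
  | succ n ih => rw [gaussBinom_succ_succ, gaussBinom_eq_zero_of_lt t n.lt_succ_self, ih]; simp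

lemma qPochhammer_succ (n : ℕ) : qPochhammer t (n + 1) = qPochhammer t n * (1 - t ^ (n + 1)) :=
  prod_range_succ _ _

theorem gaussBinom_mul_qPochhammer_mul_qPochhammer (a b : ℕ) :
    gaussBinom t (a + b) a * qPochhammer t a * qPochhammer t b = qPochhammer t (a + b) := by
  induction a generalizing b with
  | zero => simp [qPochhammer]
  | succ a iha =>
    induction b with
    | zero => simp [qPochhammer]
    | succ b ihb =>
      have hG := gaussBinom_succ_succ t (a + 1 + b) a
      rw [show a + 1 + b - a = b + 1 by omega] at hG
      have ha := iha (b + 1)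
      rw [show a + (b + 1) = a + 1 + b by ring, qPochhammer_succ t b] at ha
      rw [qPochhammer_succ t a] at ihb
      rw [show a + 1 + (b + 1) = a + 1 + b + 1 by ring, hG, qPochhammer_succ t (a + 1 + b),
        qPochhammer_succ t b, qPochhammer_succ t a]
      linear_combination (1 - t ^ (b + 1)) * ihb + t ^ (b + 1) * (1 - t ^ (a + 1)) * ha

theorem prod_add_mul_pow_eq_sum (w z : A) (n : ℕ) :
    ∏ i ∈ range n, (w + z * t ^ i) =
      ∑ k ∈ range (n + 1), t ^ k.choose 2 * gaussBinom t n k * z ^ k * w ^ (n - k) := by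
  induction n with
  | zero => simp
  | succ n ih =>
    set T : ℕ → A := fun k ↦ t ^ k.choose 2 * gaussBinom t n k * z ^ k * w ^ (n - k)
    set B : ℕ → A := fun k ↦
      t ^ (k + 1).choose 2 * gaussBinom t n (k + 1) * z ^ (k + 1) * w ^ (n - k)
    have hpascal : ∀ k ∈ range (n + 1),
        t ^ (k + 1).choose 2 * gaussBinom t (n + 1) (k + 1) * z ^ (k + 1) * w ^ (n + 1 - (k + 1)) =
          B k + T k * (z * t ^ n) := by
      intro k hk
      have ht : t ^ n = t ^ k * t ^ (n - k) := by
        rw [← pow_add, Nat.add_sub_cancel' (Nat.lt_succ_iff.mp (mem_range.mp hk))]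
      simp only [B, T, gaussBinom_succ_succ, Nat.add_sub_add_right, Nat.choose_two_succ, ht]
      ring
    have hshift :
        ∑ k ∈ range (n + 1), T k * w = ∑ k ∈ range (n + 1), B k + w ^ (n + 1) := by
      have hB : B n = 0 := by simp [B, gaussBinom_eq_zero_of_lt t n.lt_succ_self]
      rw [sum_range_succ', sum_range_succ B, hB, add_zero]
      congr 1
      · refine sum_congr rfl fun k hk ↦ ?_
        rw [mul_assoc, ← pow_succ, show n - (k + 1) + 1 = n - k by have := mem_range.mp hk; omega]
      · simp [T, pow_succ]
    rw [prod_range_succ, ih, sum_range_succ' _ (n + 1), sum_congr rfl hpascal, sum_add_distrib,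
      sum_mul]
    simp only [mul_add, sum_add_distrib, Nat.choose_zero_succ, gaussBinom_zero_right, Nat.sub_zero]
    linear_combination hshift

lemma qPochhammer_two_mul (N : ℕ) :
    qPochhammer t (2 * N) = (∏ j ∈ range N, (1 - t ^ (2 * j + 1))) * qPochhammer (t ^ 2) N := by
  induction N with
  | zero => simp [qPochhammer]
  | succ N ih =>
    rw [show 2 * (N + 1) = 2 * N + 1 + 1 by ring, qPochhammer_succ, qPochhammer_succ, ih,
      qPochhammer_succ, prod_range_succ, ← pow_mul]
    ring_nf

lemma prod_one_sub_pow_smodEq_one {ι : Type*} {s : Finset ι} {e : ι → ℕ} {n : ℕ}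
    (h : ∀ i ∈ s, n ≤ e i) : ∏ i ∈ s, (1 - t ^ e i) ≡ 1 [SMOD Ideal.span {t ^ n}] :=
  calc ∏ i ∈ s, (1 - t ^ e i) ≡ ∏ _i ∈ s, 1 [SMOD Ideal.span {t ^ n}] := by
        refine SModEq.prod fun i hi ↦ ?_
        rw [SModEq.sub_mem, sub_sub_cancel_left, Ideal.neg_mem_iff, Ideal.mem_span_singleton]
        exact pow_dvd_pow t (h i hi)
    _ = 1 := prod_const_one

lemma qPochhammer_smodEq_qPochhammer {a c : ℕ} (h : a ≤ c) :
    qPochhammer t c ≡ qPochhammer t a [SMOD Ideal.span {t ^ (a + 1)}] := by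
  obtain ⟨d, rfl⟩ := Nat.exists_eq_add_of_le h
  have htail : ∏ i ∈ range d, (1 - t ^ (a + i + 1)) ≡ 1 [SMOD Ideal.span {t ^ (a + 1)}] :=
    prod_one_sub_pow_smodEq_one t fun i _ ↦ by omega
  rw [qPochhammer, prod_range_add]
  simpa [qPochhammer] using (SModEq.refl (qPochhammer t a)).mul htail

end GaussBinom

lemma SModEq.of_mul_right_of_isUnit {A : Type*} [CommRing A] {I : Ideal A} {x y u : A}
    (hu : IsUnit u) (h : x * u ≡ y * u [SMOD I]) : x ≡ y [SMOD I] := by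
  obtain ⟨v, hv⟩ := hu.exists_right_inv
  simpa [mul_assoc, hv] using h.mul (SModEq.refl v)

namespace PowerSeries

variable {R : Type*} [CommRing R]

lemma smodEq_X_pow_iff {F G : R⟦X⟧} {n : ℕ} :
    F ≡ G [SMOD Ideal.span {X ^ n}] ↔ ∀ i < n, coeff i F = coeff i G := by
  simp only [SModEq.sub_mem, Ideal.mem_span_singleton, X_pow_dvd_iff, map_sub, sub_eq_zero]

lemma eq_of_forall_smodEq_X_pow {F G : R⟦X⟧} (h : ∀ n, F ≡ G [SMOD Ideal.span {X ^ n}]) :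
    F = G :=
  ext fun i ↦ smodEq_X_pow_iff.mp (h (i + 1)) i i.lt_succ_self

lemma C_dvd_iff_dvd_coeff (a : R) (F : R⟦X⟧) : C a ∣ F ↔ ∀ i, a ∣ coeff i F := by
  constructor
  · rintro ⟨G, rfl⟩ i
    exact ⟨coeff i G, coeff_C_mul i G a⟩
  · intro h
    choose c hc using h
    exact ⟨mk c, ext fun i ↦ by rw [coeff_C_mul, coeff_mk, hc]⟩

lemma sq_eq_expand_two (F : (ZMod 2)⟦X⟧) : F ^ 2 = expand 2 two_ne_zero F := by
  have := MvPowerSeries.map_frobenius_expand 2 two_ne_zero (f := F)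
  rw [ZMod.frobenius_zmod] at this
  exact this.symm

lemma isUnit_qPochhammer {t : R⟦X⟧} (ht : constantCoeff t = 0) (n : ℕ) :
    IsUnit (qPochhammer t n) := by
  rw [isUnit_iff_constantCoeff, qPochhammer, map_prod]
  simp [ht]

theorem gaussBinom_mul_qPochhammer_smodEq_one {t : R⟦X⟧} (ht : constantCoeff t = 0)
    {a b c : ℕ} (hc : min a b ≤ c) :
    gaussBinom t (a + b) a * qPochhammer t c ≡ 1 [SMOD Ideal.span {t ^ (min a b + 1)}] := by
  have key := gaussBinom_mul_qPochhammer_mul_qPochhammer t a b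
  rcases le_total a b with hab | hab
  · rw [min_eq_left hab] at hc ⊢
    have h : gaussBinom t (a + b) a * qPochhammer t a * qPochhammer t b ≡ 1 * qPochhammer t b
        [SMOD Ideal.span {t ^ (a + 1)}] := by
      rw [key, one_mul]
      exact (qPochhammer_smodEq_qPochhammer t (by omega)).mono
        (Ideal.span_singleton_le_span_singleton.mpr (pow_dvd_pow t (by omega)))
    exact ((SModEq.refl _).mul (qPochhammer_smodEq_qPochhammer t hc)).trans
      (SModEq.of_mul_right_of_isUnit (isUnit_qPochhammer ht b) h)
  · rw [min_eq_right hab] at hc ⊢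
    have h : gaussBinom t (a + b) a * qPochhammer t b * qPochhammer t a ≡ 1 * qPochhammer t a
        [SMOD Ideal.span {t ^ (b + 1)}] := by
      rw [mul_right_comm, key, one_mul]
      exact (qPochhammer_smodEq_qPochhammer t (by omega)).mono
        (Ideal.span_singleton_le_span_singleton.mpr (pow_dvd_pow t (by omega)))
    exact ((SModEq.refl _).mul (qPochhammer_smodEq_qPochhammer t hc)).trans
      (SModEq.of_mul_right_of_isUnit (isUnit_qPochhammer ht a) h)

lemma prod_X_pow_two_mul_sub_X_pow (N : ℕ) :
    ∏ i ∈ range (2 * N), (X ^ (2 * N) + -X * (X ^ 2) ^ i : R⟦X⟧) =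
      (-1) ^ N * X ^ (3 * N ^ 2) * (∏ j ∈ range N, (1 - X ^ (2 * j + 1))) ^ 2 := by
  have hlow : ∀ i ∈ range N, (X ^ (2 * N) + -X * (X ^ 2) ^ (N - 1 - i) : R⟦X⟧) =
      -1 * X ^ (2 * (N - 1 - i) + 1) * (1 - X ^ (2 * i + 1)) := by
    intro i hi
    have : 2 * N = (2 * (N - 1 - i) + 1) + (2 * i + 1) := by have := mem_range.mp hi; omega
    rw [this, ← pow_mul]
    ring
  have hhigh : ∀ i ∈ range N, (X ^ (2 * N) + -X * (X ^ 2) ^ (N + i) : R⟦X⟧) =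
      X ^ (2 * N) * (1 - X ^ (2 * i + 1)) := by
    intro i _
    rw [← pow_mul]
    ring
  rw [show range (2 * N) = range (N + N) by rw [two_mul], prod_range_add, ← prod_range_reflect,
    prod_congr rfl hlow, prod_congr rfl hhigh, prod_mul_distrib, prod_mul_distrib,
    prod_mul_distrib, prod_range_reflect (fun j ↦ (X : R⟦X⟧) ^ (2 * j + 1)),
    prod_range_pow_two_mul_add_one]
  simp only [prod_const, card_range]
  ring

theorem sq_prod_one_sub_X_pow_odd_eq_sum (N : ℕ) :
    (∏ j ∈ range N, (1 - X ^ (2 * j + 1) : R⟦X⟧)) ^ 2 =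
      ∑ k ∈ range (2 * N + 1),
        (-1) ^ (N + k) * X ^ (((N : ℤ) - k).natAbs ^ 2) * gaussBinom (X ^ 2) (2 * N) k := by
  have hterm : ∀ k ∈ range (2 * N + 1),
      (X ^ 2 : R⟦X⟧) ^ k.choose 2 * gaussBinom (X ^ 2) (2 * N) k * (-X) ^ k *
          (X ^ (2 * N)) ^ (2 * N - k) =
        (-1) ^ N * X ^ (3 * N ^ 2) *
          ((-1) ^ (N + k) * X ^ (((N : ℤ) - k).natAbs ^ 2) * gaussBinom (X ^ 2) (2 * N) k) := by
    intro k hk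
    have hk : k ≤ 2 * N := Nat.lt_succ_iff.mp (mem_range.mp hk)
    have hexp :
        2 * k.choose 2 + k + 2 * N * (2 * N - k) = 3 * N ^ 2 + ((N : ℤ) - k).natAbs ^ 2 := by
      rw [Nat.two_mul_choose_two_add_self]
      zify [hk]
      rw [sq_abs]
      ring
    have hsign : (-1 : R⟦X⟧) ^ k = (-1) ^ N * (-1) ^ (N + k) := by
      rw [← pow_add, ← add_assoc, ← two_mul, pow_add, pow_mul, neg_one_sq, one_pow, one_mul]
    have hX : (X ^ 2 : R⟦X⟧) ^ k.choose 2 * X ^ k * (X ^ (2 * N)) ^ (2 * N - k) =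
        X ^ (3 * N ^ 2) * X ^ (((N : ℤ) - k).natAbs ^ 2) := by
      rw [← pow_mul, ← pow_mul, ← pow_add, ← pow_add, ← pow_add, ← hexp]
    rw [neg_pow, hsign]
    linear_combination ((-1) ^ N * (-1) ^ (N + k) * gaussBinom (X ^ 2) (2 * N) k) * hX
  -- Cauchy's theorem at `t = X²`, `w = X^{2N}`, `z = -X`: both sides carry `(-1)^N X^{3N²}`.
  have h := prod_add_mul_pow_eq_sum (X ^ 2 : R⟦X⟧) (X ^ (2 * N)) (-X) (2 * N)
  rw [prod_X_pow_two_mul_sub_X_pow, sum_congr rfl hterm, ← mul_sum] at h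
  rw [mul_assoc, mul_assoc] at h
  exact X_pow_mul_cancel ((isUnit_one.neg.pow N).mul_left_cancel h)

end PowerSeries

lemma f_smodEq_qPochhammer {m n N : ℕ} (hm : 0 < m) (hn : n ≤ N + 1) :
    f m ≡ qPochhammer (X ^ m) N [SMOD Ideal.span {X ^ n}] := by
  refine smodEq_X_pow_iff.mpr fun i hi ↦ ?_
  have hle : Ideal.span {(X ^ m : ℤ⟦X⟧) ^ (i + 1)} ≤ Ideal.span {X ^ (i + 1)} := by
    rw [Ideal.span_singleton_le_span_singleton, ← pow_mul]
    exact pow_dvd_pow X (by nlinarith)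
  have hprod :=
    (qPochhammer_smodEq_qPochhammer (X ^ m : ℤ⟦X⟧) (show i ≤ N by omega)).mono hle
  rw [smodEq_X_pow_iff.mp hprod i i.lt_succ_self, f, coeff_mk, qPochhammer, range_eq_Ico]
  simp_rw [← pow_mul]
  rw [prod_Ico_add' (fun k ↦ (1 - X ^ (m * k) : ℤ⟦X⟧)) 0 i 1]
  rfl

section Theta

variable (N : ℕ)

lemma sum_neg_one_pow_mul_X_pow_natAbs_sq :
    ∑ k ∈ range (2 * N + 1), (-1) ^ (N + k) * X ^ (((N : ℤ) - k).natAbs ^ 2) =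
      1 + 2 * ∑ s ∈ range N, ((-1) ^ (s + 1) * X ^ ((s + 1) ^ 2) : ℤ⟦X⟧) := by
  have hlow : ∀ i ∈ range N,
      ((-1) ^ (N + (N - 1 - i)) * X ^ (((N : ℤ) - ↑(N - 1 - i)).natAbs ^ 2) : ℤ⟦X⟧) =
        (-1) ^ (i + 1) * X ^ ((i + 1) ^ 2) := by
    intro i hi
    have := mem_range.mp hi
    rw [show N + (N - 1 - i) = 2 * (N - 1 - i) + (i + 1) by omega,
      show ((N : ℤ) - ↑(N - 1 - i)).natAbs = i + 1 by omega, pow_add, pow_mul]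
    simp
  have hhigh : ∀ i ∈ range N,
      ((-1) ^ (N + (N + (i + 1))) * X ^ (((N : ℤ) - ↑(N + (i + 1))).natAbs ^ 2) : ℤ⟦X⟧) =
        (-1) ^ (i + 1) * X ^ ((i + 1) ^ 2) := by
    intro i _
    rw [show N + (N + (i + 1)) = 2 * N + (i + 1) by omega,
      show ((N : ℤ) - ↑(N + (i + 1))).natAbs = i + 1 by omega, pow_add, pow_mul]
    simp
  rw [show 2 * N + 1 = N + (N + 1) by omega, sum_range_add, sum_range_succ', ← sum_range_reflect,
    sum_congr rfl hlow, sum_congr rfl hhigh]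
  simp
  ring

lemma S1_smodEq_sum : S1 ≡ ∑ s ∈ range N, ((-1) ^ (s + 1) * X ^ ((s + 1) ^ 2) : ℤ⟦X⟧)
    [SMOD Ideal.span {X ^ (N + 1)}] := by
  refine smodEq_X_pow_iff.mpr fun i hi ↦ ?_
  have hC : ∀ s : ℕ, (-1 : ℤ⟦X⟧) ^ (s + 1) = C ((-1) ^ (s + 1)) := by simp
  simp_rw [map_sum, hC, coeff_C_mul_X_pow, S1, coeff_mk]
  split_ifs with h
  · obtain ⟨hi0, hsq⟩ := h
    have hr : 1 ≤ Nat.sqrt i := Nat.sqrt_pos.mpr (Nat.pos_of_ne_zero hi0)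
    have hrN : Nat.sqrt i ≤ N := by nlinarith
    rw [sum_eq_single (Nat.sqrt i - 1)]
    · rw [if_pos (by rw [Nat.sub_add_cancel hr, sq, hsq]), Nat.sub_add_cancel hr]
    · intro s _ hs
      rw [if_neg]
      rintro rfl
      rw [Nat.sqrt_eq'] at hs
      omega
    · intro hs
      exact absurd (mem_range.mpr (by omega)) hs
  · refine (sum_eq_zero fun s _ ↦ if_neg ?_).symm
    rintro rfl
    exact h ⟨by positivity, by rw [Nat.sqrt_eq', sq]⟩

lemma sum_mul_gaussBinom_mul_qPochhammer_smodEq :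
    (∑ k ∈ range (2 * N + 1),
        (-1) ^ (N + k) * X ^ (((N : ℤ) - k).natAbs ^ 2) * gaussBinom (X ^ 2) (2 * N) k) *
        qPochhammer (X ^ 2) N ≡
      ∑ k ∈ range (2 * N + 1), ((-1) ^ (N + k) * X ^ (((N : ℤ) - k).natAbs ^ 2) : ℤ⟦X⟧)
      [SMOD Ideal.span {X ^ N}] := by
  rw [sum_mul]
  refine SModEq.sum fun k hk ↦ ?_
  have hk : k ≤ 2 * N := Nat.lt_succ_iff.mp (mem_range.mp hk)
  set d := ((N : ℤ) - k).natAbs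
  -- with `d = |N - k|` the `k`-th terms agree modulo `X^{d² + 2(N - d + 1)}`, a multiple of `X^N`
  have hG := gaussBinom_mul_qPochhammer_smodEq_one (t := (X ^ 2 : ℤ⟦X⟧)) (by simp)
    (a := k) (b := 2 * N - k) (c := N) (by omega)
  rw [Nat.add_sub_cancel' hk, show min k (2 * N - k) = N - d by omega, ← pow_mul, SModEq.sub_mem,
    Ideal.mem_span_singleton] at hG
  rw [SModEq.sub_mem, Ideal.mem_span_singleton]
  have hexp : X ^ N ∣ (X ^ (d ^ 2) * X ^ (2 * (N - d + 1)) : ℤ⟦X⟧) := by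
    rw [← pow_add]
    exact pow_dvd_pow X (by have := Nat.le_self_pow two_ne_zero d; omega)
  convert (hexp.trans (mul_dvd_mul_left _ hG)).mul_left ((-1) ^ (N + k)) using 1
  ring

end Theta

theorem f_one_sq : f 1 ^ 2 = f 2 * (1 + 2 * S1) := by
  refine eq_of_forall_smodEq_X_pow fun N ↦ ?_
  set O := ∏ j ∈ range N, (1 - X ^ (2 * j + 1) : ℤ⟦X⟧)
  have h1 : f 1 ≡ O * qPochhammer (X ^ 2) N [SMOD Ideal.span {X ^ N}] := by
    simpa [qPochhammer_two_mul] using f_smodEq_qPochhammer (N := 2 * N) one_pos (by omega)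
  have h2 : f 2 ≡ qPochhammer (X ^ 2) N [SMOD Ideal.span {X ^ N}] :=
    f_smodEq_qPochhammer two_pos (by omega)
  have hphi : O ^ 2 * qPochhammer (X ^ 2) N ≡ 1 + 2 * S1 [SMOD Ideal.span {X ^ N}] := by
    rw [sq_prod_one_sub_X_pow_odd_eq_sum]
    refine (sum_mul_gaussBinom_mul_qPochhammer_smodEq N).trans ?_
    rw [sum_neg_one_pow_mul_X_pow_natAbs_sq]
    exact (SModEq.refl 1).add ((SModEq.refl 2).mul ((S1_smodEq_sum N).symm.mono
      (Ideal.span_singleton_le_span_singleton.mpr (pow_dvd_pow X N.le_succ))))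
  calc f 1 ^ 2 ≡ (O * qPochhammer (X ^ 2) N) ^ 2 [SMOD Ideal.span {X ^ N}] := SModEq.pow 2 h1
    _ = O ^ 2 * qPochhammer (X ^ 2) N * qPochhammer (X ^ 2) N := by ring
    _ ≡ (1 + 2 * S1) * f 2 [SMOD Ideal.span {X ^ N}] := hphi.mul h2.symm
    _ = f 2 * (1 + 2 * S1) := mul_comm _ _
lemma map_S2_eq_expand_map_S1 :
    map (Int.castRingHom (ZMod 2)) S2 =
      expand 2 two_ne_zero (map (Int.castRingHom (ZMod 2)) S1) := by
  ext i
  rw [coeff_expand, coeff_map, coeff_map, S2, S1, coeff_mk, coeff_mk]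
  by_cases h2 : 2 ∣ i
  · obtain ⟨m, rfl⟩ := h2
    rw [if_pos (dvd_mul_right 2 m), Nat.mul_div_cancel_left m two_pos]
    by_cases hm : m ≠ 0 ∧ Nat.sqrt m * Nat.sqrt m = m
    · rw [if_pos ⟨Nat.sqrt m, Nat.sqrt_pos.mpr (Nat.pos_of_ne_zero hm.1), by rw [hm.2]⟩,
        if_pos hm]
      simp [show (-1 : ZMod 2) = 1 from rfl]
    · rw [if_neg, if_neg hm]
      rintro ⟨k, hk, hkm⟩
      have hmk : m = k * k := by omega
      exact hm ⟨by rw [hmk]; positivity, by rw [hmk, Nat.sqrt_eq]⟩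
  · rw [if_neg h2, if_neg]
    · rfl
    · rintro ⟨k, -, rfl⟩
      exact h2 (dvd_mul_right 2 _)

lemma two_dvd_S1_sq_sub_S2 : (2 : ℤ⟦X⟧) ∣ S1 ^ 2 - S2 := by
  have h : map (Int.castRingHom (ZMod 2)) (S1 ^ 2 - S2) = 0 := by
    rw [map_sub, map_pow, sq_eq_expand_two, map_S2_eq_expand_map_S1, sub_self]
  rw [← map_ofNat C, C_dvd_iff_dvd_coeff]
  intro i
  have hi : ((coeff i (S1 ^ 2 - S2) : ℤ) : ZMod 2) = 0 := by
    rw [← eq_intCast (Int.castRingHom (ZMod 2)), ← coeff_map, h, map_zero]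
  exact_mod_cast (ZMod.intCast_zmod_eq_zero_iff_dvd _ 2).mp hi

lemma eight_dvd_inverse_one_add_two_mul_sub {A : Type*} [CommRing A] {S T : A}
    (hu : IsUnit (1 + 2 * S)) (h : 2 ∣ S ^ 2 - T) :
    8 ∣ Ring.inverse (1 + 2 * S) - (1 - 2 * S + 4 * T) := by
  obtain ⟨c, hc⟩ := h
  have hinv := Ring.inverse_mul_cancel _ hu
  exact ⟨Ring.inverse (1 + 2 * S) * (c - S * T), by
    linear_combination (1 - 2 * S + 4 * T) * hinv + (4 * Ring.inverse (1 + 2 * S)) * hc⟩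

lemma mul_inverse_sq_eq_inverse {M : Type*} [CommMonoidWithZero M] {a b c : M} (ha : IsUnit a)
    (h : a ^ 2 = b * c) : b * Ring.inverse a ^ 2 = Ring.inverse c := by
  have hc : IsUnit c := isUnit_of_mul_isUnit_right (h ▸ ha.pow 2)
  calc b * Ring.inverse a ^ 2 = Ring.inverse c * (c * b) * Ring.inverse a ^ 2 := by
        rw [← mul_assoc, Ring.inverse_mul_cancel c hc, one_mul]
    _ = Ring.inverse c * (a * Ring.inverse a) ^ 2 := by rw [mul_pow, h, mul_comm c b, mul_assoc]
    _ = Ring.inverse c := by rw [Ring.mul_inverse_cancel a ha, one_pow, mul_one]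

lemma isUnit_f_one : IsUnit (f 1) := by
  rw [isUnit_iff_constantCoeff, ← coeff_zero_eq_constantCoeff_apply, f, coeff_mk]
  simp

lemma isUnit_one_add_two_mul_S1 : IsUnit (1 + 2 * S1) := by
  rw [isUnit_iff_constantCoeff, ← coeff_zero_eq_constantCoeff_apply]
  simp [S1]

theorem stmt11 (n : ℕ) :
    (8 : ℤ) ∣ PowerSeries.coeff n
      (f 2 * Ring.inverse (f 1) ^ 2 - (1 - 2 * S1 + 4 * S2)) := by
  rw [mul_inverse_sq_eq_inverse isUnit_f_one f_one_sq]
  have h8 := eight_dvd_inverse_one_add_two_mul_sub isUnit_one_add_two_mul_S1 two_dvd_S1_sq_sub_S2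
  rw [← map_ofNat C, C_dvd_iff_dvd_coeff] at h8
  exact h8 n
end
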